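/- arXiv:1710.05498 — 2 statements merged into one kernel-verified Lean document; each statement's English description precedes it below -/
import Mathlib

section
/- Let G be an abelian subgroup of the isometry group of ℝ^k (with a chosen origin 0), so that every element of G can be written as a pair (A, v) with A ∈ O(k) and v ∈ ℝ^k acting by x ↦ A x + v. Suppose G satisfies property (P): for every (A, v) ∈ G, the element (A, 0) also belongs to G. Then every compact subgroup of G fixes the origin 0. -/
/-- `ℝ^k` with the Euclidean metric. -/
noncomputable abbrev E (k : ℕ) := EuclideanSpace ℝ (Fin k)

/-- The isometry `x ↦ A x + v` of `ℝ^k`, i.e. the element `(A, v)` of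
`Isom(ℝ^k) = ℝ^k ⋊ O(k)`. -/
noncomputable def aff {k : ℕ} (A : E k ≃ₗᵢ[ℝ] E k) (v : E k) : E k ≃ᵢ E k :=
  A.toIsometryEquiv.trans (IsometryEquiv.addLeft v)

/-- Topology of pointwise convergence on the isometry group of `ℝ^k`
(equivalently, of uniform convergence on compact sets). -/
noncomputable instance {k : ℕ} : TopologicalSpace (E k ≃ᵢ E k) :=
  TopologicalSpace.induced (fun g => (g : E k → E k)) Pi.topologicalSpace

lemma aff_apply {k : ℕ} (A : E k ≃ₗᵢ[ℝ] E k) (v : E k) (x : E k) :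
    aff A v x = v + A x := rfl

/-- if an abelian subgroup `G` of `Isom(ℝ^k)` satisfies property (P)
(whenever `(A,v) ∈ G`, also `(A,0) ∈ G`), then every compact subgroup of `G`
fixes the origin. -/
theorem stmt0 {k : ℕ} (G : Subgroup (E k ≃ᵢ E k))
    (hform : ∀ g ∈ G, ∃ (A : E k ≃ₗᵢ[ℝ] E k) (v : E k), g = aff A v)
    (habel : ∀ a ∈ G, ∀ b ∈ G, a * b = b * a)
    (hP : ∀ (A : E k ≃ₗᵢ[ℝ] E k) (v : E k), aff A v ∈ G → aff A 0 ∈ G)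
    (K : Subgroup (E k ≃ᵢ E k)) (hKG : K ≤ G)
    (hK : IsCompact (K : Set (E k ≃ᵢ E k))) :
    ∀ g ∈ K, g (0 : E k) = 0 := by
  intro g hg
  obtain ⟨A, v, rfl⟩ := hform g (hKG hg)
  -- from commutativity with (A,0): A v = v
  have hA0 : aff A 0 ∈ G := hP A v (hKG hg)
  have hcomm := habel (aff A v) (hKG hg) (aff A 0) hA0
  have hAv : A v = v := by
    have := congrArg (fun f => f (0 : E k)) hcomm
    simpa [IsometryEquiv.mul_apply, aff_apply] using this.symm
  -- g^n (0) = n • v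
  have hpow : ∀ n : ℕ, ((aff A v) ^ n) (0 : E k) = (n : ℝ) • v := by
    intro n
    induction n with
    | zero => simp
    | succ n ih =>
      have : (aff A v) ^ (n + 1) = aff A v * (aff A v) ^ n := by
        rw [pow_succ']
      rw [this, IsometryEquiv.mul_apply, ih, aff_apply, A.map_smul, hAv]
      push_cast
      rw [add_smul, one_smul, add_comm]
  -- evaluation at 0 is continuous, so the orbit of 0 is compact, hence bounded
  have hev : Continuous fun h : E k ≃ᵢ E k => h (0 : E k) := by
    exact (continuous_apply (0 : E k)).comp continuous_induced_dom
  have horb : IsCompact ((fun h : E k ≃ᵢ E k => h (0 : E k)) '' (K : Set (E k ≃ᵢ E k))) :=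
    hK.image hev
  obtain ⟨C, hC⟩ := horb.isBounded.exists_norm_le
  have hv : v = 0 := by
    by_contra hvne
    obtain ⟨n, hn⟩ := exists_nat_gt (C / ‖v‖)
    have hmem : ((n : ℝ) • v) ∈ (fun h : E k ≃ᵢ E k => h (0 : E k)) '' (K : Set (E k ≃ᵢ E k)) :=
      ⟨(aff A v) ^ n, pow_mem hg n, hpow n⟩
    have hle := hC _ hmem
    rw [norm_smul, Real.norm_natCast] at hle
    have hvpos : 0 < ‖v‖ := norm_pos_iff.mpr hvne
    have : C / ‖v‖ < C / ‖v‖ := lt_of_lt_of_le hn (by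
      rw [le_div_iff₀ hvpos] at *
      exact hle)
    exact lt_irrefl _ this
  simp [aff_apply, hv]
end

section
/- Let Y = ℝ^k × X be a product metric space, where X is a metric space in which every point lies on no line (X contains no isometrically embedded copy of ℝ) and every isometry of X fixes a distinguished point x₀. Then every isometry g of Y maps the slice ℝ^k × {x₀} into itself. -/
/-- The product `Y = ℝ^k × X` with the `ℓ²` product metric
`d((u,a),(v,b))² = |u−v|² + d_X(a,b)²`. -/
noncomputable abbrev Y (k : ℕ) (X : Type*) [MetricSpace X] := WithLp 2 (E k × X)

/-!
Along a line in `ℝ^k × X`, the triangle inequalities at a subdivision `s < t < u` are squeezed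
between the two factors exactly as in the Euclidean plane, so both must be equalities with
proportional pieces: the `X`-component moves at constant speed `l`. If `l > 0`, rescaling time
gives a line in `X`; hence every line of `ℝ^k × X` is horizontal. Two points of a slice
`ℝ^k × {a}` lie on a horizontal line, so an isometry `g` maps slices into slices and induces a
1-Lipschitz map `ψ` of `X`, inverted by the map induced by `g⁻¹`. Thus `ψ` is an isometry of `X`,
it fixes `x₀`, and `g` preserves `ℝ^k × {x₀}`.
-/

open WithLp

/-- Equality case of the triangle inequality in the Euclidean plane, for the vectors `(a, b)` and
`(c, d)` of lengths `p` and `q` whose sum is dominated coordinatewise by `(e, f)`. -/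
lemma eq_add_and_mul_eq_mul_of_sq_add_sq {a b c d e f p q : ℝ} (hb : 0 ≤ b) (hd : 0 ≤ d)
    (he : 0 ≤ e) (hf : 0 ≤ f) (hp : 0 ≤ p) (hq : 0 ≤ q)
    (hab : a ^ 2 + b ^ 2 = p ^ 2) (hcd : c ^ 2 + d ^ 2 = q ^ 2)
    (hef : e ^ 2 + f ^ 2 = (p + q) ^ 2) (hace : e ≤ a + c) (hbdf : f ≤ b + d) :
    f = b + d ∧ b * q = d * p := by
  have hlagrange : (a * d - b * c) ^ 2 = p ^ 2 * q ^ 2 - (a * c + b * d) ^ 2 := by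
    rw [← hab, ← hcd]; ring
  have hcs : a * c + b * d ≤ p * q := by
    nlinarith [sq_nonneg (a * d - b * c), mul_nonneg hp hq]
  have he2 : e ^ 2 ≤ (a + c) ^ 2 := pow_le_pow_left₀ he hace 2
  have hf2 : f ^ 2 ≤ (b + d) ^ 2 := pow_le_pow_left₀ hf hbdf 2
  have hf_sq : f ^ 2 = (b + d) ^ 2 := by nlinarith
  have hcs_eq : a * c + b * d = p * q := by nlinarith
  have had : a * d = b * c := by
    rw [hcs_eq, ← mul_pow, sub_self, sq_eq_zero_iff, sub_eq_zero] at hlagrange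
    exact hlagrange
  have hbq : (b * q) ^ 2 = (d * p) ^ 2 := by
    linear_combination d ^ 2 * hab - b ^ 2 * hcd - (a * d + b * c) * had
  exact ⟨(sq_eq_sq₀ hf (by positivity)).mp hf_sq,
    (sq_eq_sq₀ (by positivity) (by positivity)).mp hbq⟩

lemma eq_of_forall_subdivision_eq {r : ℝ → ℝ → ℝ}
    (hr : ∀ s t u, s < t → t < u → r s t = r s u ∧ r t u = r s u)
    {s t s' t' : ℝ} (hst : s < t) (hst' : s' < t') : r s t = r s' t' := by
  have hsub : ∀ m s t M, m < s → s < t → t < M → r s t = r m M := fun m s t M hms hst htM =>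
    (hr m s t hms hst).2.trans (hr m t M (hms.trans hst) htM).1
  rw [hsub (min s s' - 1) s t (max t t' + 1), hsub (min s s' - 1) s' t' (max t t' + 1)] <;>
    grind

lemma exists_isometry_real_through {V P : Type*} [NormedAddCommGroup V] [NormedSpace ℝ V]
    [MetricSpace P] [NormedAddTorsor V P] {x y : P} (hxy : x ≠ y) :
    ∃ ψ : ℝ → P, Isometry ψ ∧ ψ 0 = x ∧ ψ (dist x y) = y := by
  have hd : dist x y ≠ 0 := dist_ne_zero.mpr hxy
  refine ⟨fun t => AffineMap.lineMap x y (t / dist x y), Isometry.of_dist_eq fun s t => ?_, ?_, ?_⟩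
  · rw [dist_lineMap_lineMap, Real.dist_eq, Real.dist_eq, ← sub_div, abs_div,
      abs_of_pos (dist_pos.mpr hxy), div_mul_cancel₀ _ hd]
  · simp
  · simp [div_self hd]

namespace WithLp

section Prod

variable {α β : Type*}

section PseudoMetric

variable [PseudoMetricSpace α] [PseudoMetricSpace β]

lemma prod_dist_sq_eq_of_L2 (x y : WithLp 2 (α × β)) :
    dist x y ^ 2 = dist x.fst y.fst ^ 2 + dist x.snd y.snd ^ 2 := by
  rw [prod_dist_eq_add (by norm_num), ENNReal.toReal_ofNat, ← Real.rpow_natCast _ 2,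
    ← Real.rpow_mul (by positivity)]
  norm_num

lemma dist_toLp_prod_left (x y : α) (b : β) :
    dist (toLp 2 (x, b)) (toLp 2 (y, b)) = dist x y := by
  rw [← sq_eq_sq₀ dist_nonneg dist_nonneg, prod_dist_sq_eq_of_L2]
  simp

lemma dist_toLp_prod_right (a : α) (x y : β) :
    dist (toLp 2 (a, x)) (toLp 2 (a, y)) = dist x y := by
  rw [← sq_eq_sq₀ dist_nonneg dist_nonneg, prod_dist_sq_eq_of_L2]
  simp

variable {φ : ℝ → WithLp 2 (α × β)}

lemma dist_snd_add_and_mul_eq_of_isometry (hφ : Isometry φ) {s t u : ℝ} (hst : s < t)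
    (htu : t < u) :
    dist (φ s).snd (φ u).snd = dist (φ s).snd (φ t).snd + dist (φ t).snd (φ u).snd ∧
      dist (φ s).snd (φ t).snd * (u - t) = dist (φ t).snd (φ u).snd * (t - s) := by
  have hsq : ∀ s t, dist (φ s).fst (φ t).fst ^ 2 + dist (φ s).snd (φ t).snd ^ 2 = (t - s) ^ 2 :=
    fun s t => by rw [← prod_dist_sq_eq_of_L2, hφ.dist_eq, Real.dist_eq, sq_abs]; ring
  exact eq_add_and_mul_eq_mul_of_sq_add_sq dist_nonneg dist_nonneg dist_nonneg dist_nonneg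
    (by linarith) (by linarith) (hsq s t) (hsq t u) (by rw [hsq s u]; ring)
    (dist_triangle _ _ _) (dist_triangle _ _ _)

lemma exists_dist_snd_eq_mul_of_isometry (hφ : Isometry φ) :
    ∃ l, ∀ s t, dist (φ s).snd (φ t).snd = l * dist s t := by
  set r : ℝ → ℝ → ℝ := fun s t => dist (φ s).snd (φ t).snd / (t - s)
  have hr : ∀ s t u, s < t → t < u → r s t = r s u ∧ r t u = r s u := by
    intro s t u hst htu
    obtain ⟨hadd, hmul⟩ := dist_snd_add_and_mul_eq_of_isometry hφ hst htu
    have : t - s ≠ 0 := by linarith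
    have : u - t ≠ 0 := by linarith
    have : u - s ≠ 0 := by linarith
    simp only [r, hadd]
    constructor <;> field_simp
    · linear_combination hmul
    · linear_combination (-hmul)
  refine ⟨r 0 1, fun s t => ?_⟩
  wlog hst : s ≤ t generalizing s t
  · rw [dist_comm, this t s (le_of_not_ge hst), dist_comm]
  obtain rfl | hlt := hst.eq_or_lt
  · simp
  rw [← eq_of_forall_subdivision_eq hr hlt one_pos, dist_comm s, Real.dist_eq,
    abs_of_pos (sub_pos.mpr hlt)]
  exact (div_mul_cancel₀ _ (sub_ne_zero.mpr hlt.ne')).symm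

end PseudoMetric

lemma snd_eq_of_isometry [PseudoMetricSpace α] [MetricSpace β]
    (hβ : ¬ ∃ ψ : ℝ → β, Isometry ψ) {φ : ℝ → WithLp 2 (α × β)} (hφ : Isometry φ) (s t : ℝ) :
    (φ s).snd = (φ t).snd := by
  obtain ⟨l, hl⟩ := exists_dist_snd_eq_mul_of_isometry hφ
  obtain rfl | hl0 := eq_or_ne l 0
  · simpa using hl s t
  have hlpos : 0 < l := by
    have h01 := hl 0 1
    simp only [dist_zero_left, norm_one, mul_one] at h01
    exact lt_of_le_of_ne (h01 ▸ dist_nonneg) hl0.symm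
  refine absurd ⟨fun t => (φ (t / l)).snd, Isometry.of_dist_eq fun x y => ?_⟩ hβ
  rw [hl, Real.dist_eq, Real.dist_eq, ← sub_div, abs_div, abs_of_pos hlpos, mul_div_cancel₀ _ hl0]

end Prod

section Slice

variable {V α X : Type*} [NormedAddCommGroup V] [NormedSpace ℝ V] [PseudoMetricSpace α]
  [MetricSpace X]

lemma snd_apply_toLp_eq_of_isometry (hX : ¬ ∃ ψ : ℝ → X, Isometry ψ)
    {g : WithLp 2 (V × X) → WithLp 2 (α × X)} (hg : Isometry g) (u u' : V) (a : X) :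
    (g (toLp 2 (u, a))).snd = (g (toLp 2 (u', a))).snd := by
  obtain rfl | hu := eq_or_ne u u'
  · rfl
  obtain ⟨ψ, hψ, hψ0, hψ1⟩ := exists_isometry_real_through hu
  have hline : Isometry fun t => toLp 2 (ψ t, a) :=
    Isometry.of_dist_eq fun s t => by rw [dist_toLp_prod_left, hψ.dist_eq]
  simpa [hψ0, hψ1] using snd_eq_of_isometry hX (hg.comp hline) 0 (dist u u')

lemma exists_isometryEquiv_snd_apply_toLp_eq (hX : ¬ ∃ ψ : ℝ → X, Isometry ψ)
    (g : WithLp 2 (V × X) ≃ᵢ WithLp 2 (V × X)) :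
    ∃ ψ : X ≃ᵢ X, ∀ u a, (g (toLp 2 (u, a))).snd = ψ a := by
  have hlip : ∀ (h : WithLp 2 (V × X) ≃ᵢ WithLp 2 (V × X)) (a b : X),
      dist (h (toLp 2 (0, a))).snd (h (toLp 2 (0, b))).snd ≤ dist a b := fun h a b =>
    calc _ ≤ dist (h (toLp 2 (0, a))) (h (toLp 2 (0, b))) := dist_snd_le _ _
      _ = dist a b := by rw [h.dist_eq, dist_toLp_prod_right]
  have hinv : ∀ (h : WithLp 2 (V × X) ≃ᵢ WithLp 2 (V × X)) (a : X),
      (h.symm (toLp 2 (0, (h (toLp 2 (0, a))).snd))).snd = a := fun h a => by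
    rw [snd_apply_toLp_eq_of_isometry hX h.symm.isometry 0 (h (toLp 2 (0, a))).fst]
    exact congrArg WithLp.snd (h.symm_apply_apply _)
  refine ⟨{ toFun := fun a => (g (toLp 2 (0, a))).snd
            invFun := fun a => (g.symm (toLp 2 (0, a))).snd
            left_inv := hinv g
            right_inv := hinv g.symm
            isometry_toFun := Isometry.of_dist_eq fun a b => le_antisymm (hlip g a b) ?_ },
    fun u a => snd_apply_toLp_eq_of_isometry hX g.isometry u 0 a⟩
  simpa only [hinv g] using hlip g.symm (g (toLp 2 (0, a))).snd (g (toLp 2 (0, b))).snd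

end Slice

end WithLp

/-- if `X` contains no lines and every isometry of `X` fixes `x₀`, then
every isometry of `Y = ℝ^k × X` maps the slice `ℝ^k × {x₀}` into itself. -/
theorem stmt3 {k : ℕ} {X : Type*} [MetricSpace X] (x₀ : X)
    (hnoline : ¬ ∃ φ : ℝ → X, Isometry φ)
    (hfix : ∀ φ : X ≃ᵢ X, φ x₀ = x₀)
    (g : Y k X ≃ᵢ Y k X) (v : E k) :
    ∃ w : E k, g ((WithLp.equiv 2 (E k × X)).symm (v, x₀))
      = (WithLp.equiv 2 (E k × X)).symm (w, x₀) := by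
  obtain ⟨ψ, hψ⟩ := WithLp.exists_isometryEquiv_snd_apply_toLp_eq hnoline g
  have hsnd : (g (toLp 2 (v, x₀))).snd = x₀ := (hψ v x₀).trans (hfix ψ)
  exact ⟨(g (toLp 2 (v, x₀))).fst, congrArg (toLp 2) (Prod.ext rfl hsnd)⟩
end
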